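/- Let W be a vector space over ℂ and let B, B₀ : W × W → ℂ be alternating bilinear maps (B(F,F) = 0 and B₀(F,F) = 0 for all F). Let (H_k)_{k∈ℕ} be a sequence in W such that B₀(H₀, F) = 0 for all F ∈ W and B₀(H_{k+1}, F) = B(H_k, F) for all k ∈ ℕ and all F ∈ W. Then all the Hamiltonians are in involution with respect to both brackets: B(H_k, H_ℓ) = 0 and B₀(H_k, H_ℓ) = 0 for all k, ℓ ∈ ℕ. -/
import Mathlib

/-- **Involution of the Lenard–Magri hierarchy of Hamiltonians.**
Let `W` be a `ℂ`-vector space, `B, B₀` alternating bilinear maps (the two compatible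
Poisson brackets), and `(H_k)` a sequence with `H₀` a Casimir of `B₀` satisfying the
Lenard recursion `B₀(H_{k+1},·) = B(H_k,·)`. Then all the Hamiltonians are in
involution with respect to both brackets: `B(H_k,H_ℓ) = 0 = B₀(H_k,H_ℓ)`. -/
theorem lenard_magri_hierarchy_in_involution (W : Type*) [AddCommGroup W] [Module ℂ W]
    (B B₀ : W →ₗ[ℂ] W →ₗ[ℂ] ℂ)
    (hB : ∀ F : W, B F F = 0) (hB₀ : ∀ F : W, B₀ F F = 0)
    (H : ℕ → W) (h0 : ∀ F : W, B₀ (H 0) F = 0)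
    (hrec : ∀ (k : ℕ) (F : W), B₀ (H (k + 1)) F = B (H k) F) :
    ∀ k l : ℕ, B (H k) (H l) = 0 ∧ B₀ (H k) (H l) = 0 := by
  have skew : ∀ x y : W, B x y = -B y x := by
    intro x y
    have h := hB (x + y)
    simp only [map_add, LinearMap.add_apply, hB] at h
    linear_combination h
  have key : ∀ k l : ℕ, B₀ (H k) (H l) = 0 := by
    intro k
    induction k with
    | zero => intro l; exact h0 (H l)
    | succ n ih =>
      intro l
      rw [hrec, skew, ← hrec, ← neg_neg (B₀ (H (l+1)) (H n))]
      have h := hB₀ (H (l+1) + H n)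
      simp only [map_add, LinearMap.add_apply, hB₀] at h
      have : B₀ (H (l+1)) (H n) = -B₀ (H n) (H (l+1)) := by linear_combination h
      rw [this, ih (l+1)]
      simp
  intro k l
  exact ⟨by rw [← hrec, key], key k l⟩
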